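/- Let α < β be real numbers with β − α ≥ 1 and let p ∈ [2, ∞]. There exists a constant C depending only on p such that for every f ∈ H¹((α, β)), ‖f‖_{L^p((α,β))} ≤ C (‖f‖_{L²((α,β))} + ‖f‖_{L²((α,β))}^{1/2 + 1/p} ‖f'‖_{L²((α,β))}^{1/2 − 1/p}). -/

import Mathlib

/-! On an interval of length at least `1` some point `y` satisfies `f y ^ 2 ≤ 2 ‖f‖₂²`, and the
fundamental theorem of calculus for `f ^ 2` together with Cauchy–Schwarz gives
`f x ^ 2 ≤ f y ^ 2 + 2 ‖f‖₂ ‖f'‖₂` everywhere, so `‖f‖_∞ ≤ 2 (‖f‖₂ + √(‖f‖₂ ‖f'‖₂))`.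
Interpolating, `‖f‖_p ≤ ‖f‖_∞ ^ (1 - 2/p) ‖f‖₂ ^ (2/p)`, and splitting the power of the sum gives
the claim with `C = 2`. -/

open MeasureTheory Set

section Lp

variable {X : Type*} [MeasurableSpace X] {μ : Measure X}

theorem integral_sq_eq_toReal_eLpNorm_two_sq {f : X → ℝ} (hf : AEStronglyMeasurable f μ) :
    ∫ x, f x ^ 2 ∂μ = (eLpNorm f 2 μ).toReal ^ 2 := by
  rw [toReal_eLpNorm hf, lpNorm_eq_integral_norm_rpow_toReal two_ne_zero ENNReal.ofNat_ne_top hf,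
    ← Real.rpow_natCast, ← Real.rpow_mul (by positivity)]
  norm_num

theorem integral_abs_mul_le_toReal_eLpNorm_mul {f g : X → ℝ} (hf : MemLp f 2 μ) (hg : MemLp g 2 μ) :
    ∫ x, |f x * g x| ∂μ ≤ (eLpNorm f 2 μ).toReal * (eLpNorm g 2 μ).toReal := by
  have hL2 : ∀ {h : X → ℝ}, MemLp h 2 μ →
      (∫ x, ‖h x‖ ^ (2 : ℝ) ∂μ) ^ (1 / 2 : ℝ) = (eLpNorm h 2 μ).toReal := fun hh => by
    rw [toReal_eLpNorm hh.1,
      lpNorm_eq_integral_norm_rpow_toReal two_ne_zero ENNReal.ofNat_ne_top hh.1]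
    norm_num
  have holder := integral_mul_norm_le_Lp_mul_Lq (μ := μ) Real.HolderConjugate.two_two
    (by simpa using hf) (by simpa using hg)
  rw [hL2 hf, hL2 hg] at holder
  simpa only [Real.norm_eq_abs, abs_mul] using holder

-- For `p = ∞` this reads `‖f‖_∞ ≤ ‖f‖_∞`, as `p.toReal = 0` and `q.toReal / 0 = 0`.
theorem eLpNorm_le_eLpNorm_top_rpow_mul_eLpNorm_rpow {E : Type*} [NormedAddCommGroup E]
    {f : X → E} (hf : AEStronglyMeasurable f μ) {p q : ENNReal} (hq₀ : q ≠ 0) (hq : q ≠ ⊤)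
    (hqp : q ≤ p) :
    eLpNorm f p μ ≤
      eLpNorm f ⊤ μ ^ (1 - q.toReal / p.toReal) * eLpNorm f q μ ^ (q.toReal / p.toReal) := by
  rcases eq_or_ne p ⊤ with rfl | hp
  · simp
  have hp₀ : p ≠ 0 := (pos_iff_ne_zero.2 hq₀).trans_le hqp |>.ne'
  set r := p.toReal
  set s := q.toReal
  have hs : 0 < s := ENNReal.toReal_pos hq₀ hq
  have hsr : s ≤ r := ENNReal.toReal_mono hp hqp
  have hr : 0 < r := hs.trans_le hsr
  set S := eLpNorm f ⊤ μ
  have hpoint : ∀ᵐ x ∂μ, ‖f x‖ₑ ^ r ≤ S ^ (r - s) * ‖f x‖ₑ ^ s := by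
    filter_upwards [enorm_ae_le_eLpNormEssSup f μ] with x hx
    calc ‖f x‖ₑ ^ r = ‖f x‖ₑ ^ (r - s) * ‖f x‖ₑ ^ s := by
          rw [← ENNReal.rpow_add_of_nonneg _ _ (sub_nonneg.2 hsr) hs.le, sub_add_cancel]
      _ ≤ S ^ (r - s) * ‖f x‖ₑ ^ s := by
          gcongr
          exact hx
  have hint : ∫⁻ x, ‖f x‖ₑ ^ r ∂μ ≤ S ^ (r - s) * ∫⁻ x, ‖f x‖ₑ ^ s ∂μ := by
    rw [← lintegral_const_mul'' _ (by fun_prop)]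
    exact lintegral_mono_ae hpoint
  rw [eLpNorm_eq_lintegral_rpow_enorm_toReal hp₀ hp, eLpNorm_eq_lintegral_rpow_enorm_toReal hq₀ hq]
  calc (∫⁻ x, ‖f x‖ₑ ^ r ∂μ) ^ (1 / r)
      ≤ (S ^ (r - s) * ∫⁻ x, ‖f x‖ₑ ^ s ∂μ) ^ (1 / r) := by gcongr
    _ = S ^ (1 - s / r) * ((∫⁻ x, ‖f x‖ₑ ^ s ∂μ) ^ (1 / s)) ^ (s / r) := by
        rw [ENNReal.mul_rpow_of_nonneg _ _ (by positivity), ← ENNReal.rpow_mul, ← ENNReal.rpow_mul]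
        congr 2 <;> field_simp

end Lp

theorem exists_mem_Icc_mul_le_setIntegral {g : ℝ → ℝ} {a b : ℝ} (hab : a ≤ b)
    (hg : ContinuousOn g (Icc a b)) : ∃ y ∈ Icc a b, g y * (b - a) ≤ ∫ x in Icc a b, g x := by
  obtain ⟨y, hy, hmin⟩ := isCompact_Icc.exists_isMinOn (nonempty_Icc.2 hab) hg
  refine ⟨y, hy, ?_⟩
  have := setIntegral_ge_of_const_le_real (μ := volume) measurableSet_Icc measure_Icc_lt_top.ne
    (fun x hx => hmin hx) hg.integrableOn_Icc
  rwa [Real.volume_real_Icc_of_le hab] at this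

theorem sq_sub_sq_le_two_mul_integral_abs_mul_deriv {f : ℝ → ℝ} {s : Set ℝ} (hs : s.OrdConnected)
    (hdiff : ∀ x ∈ s, DifferentiableAt ℝ f x) (hint : IntegrableOn (fun t => f t * deriv f t) s)
    {x y : ℝ} (hx : x ∈ s) (hy : y ∈ s) :
    f x ^ 2 - f y ^ 2 ≤ 2 * ∫ t in s, |f t * deriv f t| := by
  have hsub : uIcc y x ⊆ s := hs.uIcc_subset hy hx
  have hftc : ∫ t in y..x, 2 * (f t * deriv f t) = f x ^ 2 - f y ^ 2 := by
    refine intervalIntegral.integral_eq_sub_of_hasDerivAt (f := fun t => f t ^ 2) (fun t ht => ?_)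
      ((hint.mono_set hsub).intervalIntegrable.const_mul 2)
    exact ((hdiff t (hsub ht)).hasDerivAt.fun_pow 2).congr_deriv (by push_cast; ring)
  calc f x ^ 2 - f y ^ 2 = 2 * ∫ t in y..x, f t * deriv f t := by
        rw [← hftc, intervalIntegral.integral_const_mul]
    _ ≤ 2 * ∫ t in uIoc y x, |f t * deriv f t| := by
        gcongr
        have := intervalIntegral.norm_integral_le_integral_norm_uIoc
          (f := fun t => f t * deriv f t) (a := y) (b := x) (μ := volume)
        simp only [Real.norm_eq_abs] at this
        exact (le_abs_self _).trans this
    _ ≤ 2 * ∫ t in s, |f t * deriv f t| := by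
        refine mul_le_mul_of_nonneg_left ?_ zero_le_two
        exact setIntegral_mono_set hint.abs (.of_forall fun _ => abs_nonneg _)
          (uIoc_subset_uIcc.trans hsub).eventuallyLE

theorem sq_le_of_memLp_deriv {α β : ℝ} (hαβ : 1 ≤ β - α) {f : ℝ → ℝ}
    (hdiff : ∀ x ∈ Ioo α β, DifferentiableAt ℝ f x)
    (hf : MemLp f 2 (volume.restrict (Ioo α β)))
    (hf' : MemLp (deriv f) 2 (volume.restrict (Ioo α β))) {x : ℝ} (hx : x ∈ Ioo α β) :
    f x ^ 2 ≤ 2 * (eLpNorm f 2 (volume.restrict (Ioo α β))).toReal ^ 2 +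
      2 * ((eLpNorm f 2 (volume.restrict (Ioo α β))).toReal *
        (eLpNorm (deriv f) 2 (volume.restrict (Ioo α β))).toReal) := by
  have hK : Icc (α + 1 / 4) (α + 3 / 4) ⊆ Ioo α β :=
    Icc_subset_Ioo (by linarith) (by linarith)
  have hcont : ContinuousOn f (Ioo α β) := fun x hx => (hdiff x hx).continuousAt.continuousWithinAt
  obtain ⟨y, hyK, hy⟩ := exists_mem_Icc_mul_le_setIntegral (g := fun t => f t ^ 2)
    (by linarith) ((hcont.mono hK).pow 2)
  have hfy : f y ^ 2 ≤ 2 * (eLpNorm f 2 (volume.restrict (Ioo α β))).toReal ^ 2 :=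
    calc f y ^ 2 = 2 * (f y ^ 2 * (α + 3 / 4 - (α + 1 / 4))) := by ring
      _ ≤ 2 * ∫ t in Icc (α + 1 / 4) (α + 3 / 4), f t ^ 2 := by gcongr
      _ ≤ 2 * ∫ t in Ioo α β, f t ^ 2 := by
          refine mul_le_mul_of_nonneg_left ?_ zero_le_two
          exact setIntegral_mono_set hf.integrable_sq (.of_forall fun _ => sq_nonneg _)
            hK.eventuallyLE
      _ = _ := by rw [integral_sq_eq_toReal_eLpNorm_two_sq hf.1]
  have hfx := sq_sub_sq_le_two_mul_integral_abs_mul_deriv ordConnected_Ioo hdiff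
    (hf.integrable_mul hf') hx (hK hyK)
  have := integral_abs_mul_le_toReal_eLpNorm_mul hf hf'
  linarith

theorem eLpNorm_top_le_of_memLp_deriv {α β : ℝ} (hαβ : 1 ≤ β - α) {f : ℝ → ℝ}
    (hdiff : ∀ x ∈ Ioo α β, DifferentiableAt ℝ f x)
    (hf : MemLp f 2 (volume.restrict (Ioo α β)))
    (hf' : MemLp (deriv f) 2 (volume.restrict (Ioo α β))) :
    eLpNorm f ⊤ (volume.restrict (Ioo α β)) ≤
      ENNReal.ofReal (2 * ((eLpNorm f 2 (volume.restrict (Ioo α β))).toReal +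
        √((eLpNorm f 2 (volume.restrict (Ioo α β))).toReal *
          (eLpNorm (deriv f) 2 (volume.restrict (Ioo α β))).toReal))) := by
  set A := (eLpNorm f 2 (volume.restrict (Ioo α β))).toReal
  set B := (eLpNorm (deriv f) 2 (volume.restrict (Ioo α β))).toReal
  have hA : 0 ≤ A := ENNReal.toReal_nonneg
  have hB : 0 ≤ B := ENNReal.toReal_nonneg
  rw [eLpNorm_exponent_top]
  refine eLpNormEssSup_le_of_ae_bound ?_
  filter_upwards [ae_restrict_mem measurableSet_Ioo] with x hx
  have hsqrt : √(A * B) ^ 2 = A * B := Real.sq_sqrt (mul_nonneg hA hB)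
  have hfx := sq_le_of_memLp_deriv hαβ hdiff hf hf' hx
  refine Real.norm_eq_abs _ ▸ abs_le_of_sq_le_sq ?_ (by positivity)
  nlinarith [mul_nonneg hA (Real.sqrt_nonneg (A * B))]

theorem two_mul_add_sqrt_rpow_mul_rpow_le {A B u : ℝ} (hA : 0 ≤ A) (hB : 0 ≤ B) (hu₀ : 0 ≤ u)
    (hu : u ≤ 1 / 2) :
    (2 * (A + √(A * B))) ^ (1 - 2 * u) * A ^ (2 * u) ≤
      2 * (A + A ^ (1 / 2 + u) * B ^ (1 / 2 - u)) := by
  set θ := 1 - 2 * u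
  have hθ₀ : 0 ≤ θ := by linarith
  have hθ₁ : θ ≤ 1 := by linarith
  have hsplit : (2 * (A + √(A * B))) ^ θ ≤ 2 * (A ^ θ + A ^ (θ / 2) * B ^ (θ / 2)) := by
    rw [Real.mul_rpow zero_le_two (by positivity)]
    refine mul_le_mul (Real.rpow_le_self_of_one_le one_le_two hθ₁) ?_ (by positivity) zero_le_two
    calc (A + √(A * B)) ^ θ ≤ A ^ θ + √(A * B) ^ θ :=
          Real.rpow_add_le_add_rpow hA (Real.sqrt_nonneg _) hθ₀ hθ₁
      _ = A ^ θ + A ^ (θ / 2) * B ^ (θ / 2) := by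
          rw [Real.sqrt_eq_rpow, ← Real.rpow_mul (mul_nonneg hA hB), Real.mul_rpow hA hB]
          ring_nf
  have hA₁ : A ^ θ * A ^ (2 * u) = A := by
    rw [← Real.rpow_add' hA (by simp [θ]), show θ + 2 * u = 1 by ring, Real.rpow_one]
  have hA₂ : A ^ (θ / 2) * A ^ (2 * u) = A ^ (1 / 2 + u) := by
    rw [← Real.rpow_add' hA (by linarith), show θ / 2 + 2 * u = 1 / 2 + u by ring]
  calc (2 * (A + √(A * B))) ^ θ * A ^ (2 * u)
      ≤ 2 * (A ^ θ + A ^ (θ / 2) * B ^ (θ / 2)) * A ^ (2 * u) := by gcongr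
    _ = 2 * (A ^ θ * A ^ (2 * u) + A ^ (θ / 2) * A ^ (2 * u) * B ^ (θ / 2)) := by ring
    _ = 2 * (A + A ^ (1 / 2 + u) * B ^ (1 / 2 - u)) := by
        rw [hA₁, hA₂, show θ / 2 = 1 / 2 - u by ring]

/-- Gagliardo–Nirenberg type interpolation inequality on an interval `(α, β)` with
`β - α ≥ 1`: for `2 ≤ p ≤ ∞` there is a constant `C` depending only on `p` such that
`‖f‖_{L^p} ≤ C (‖f‖_{L²} + ‖f‖_{L²}^{1/2+1/p} ‖f'‖_{L²}^{1/2-1/p})` for all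
`f ∈ H¹((α,β))`.  (For `p = ∞` the exponent `1/p` is interpreted as `0`.) -/
theorem stmt1 (p : ENNReal) (hp : 2 ≤ p) :
    ∃ C : ℝ, 0 < C ∧ ∀ α β : ℝ, 1 ≤ β - α → ∀ f : ℝ → ℝ,
      (∀ x ∈ Ioo α β, DifferentiableAt ℝ f x) →
      MemLp f 2 (volume.restrict (Ioo α β)) →
      MemLp (deriv f) 2 (volume.restrict (Ioo α β)) →
      (eLpNorm f p (volume.restrict (Ioo α β))).toReal ≤
        C * ((eLpNorm f 2 (volume.restrict (Ioo α β))).toReal +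
          (eLpNorm f 2 (volume.restrict (Ioo α β))).toReal ^ ((1 : ℝ) / 2 + 1 / p.toReal) *
          (eLpNorm (deriv f) 2 (volume.restrict (Ioo α β))).toReal ^
            ((1 : ℝ) / 2 - 1 / p.toReal)) := by
  refine ⟨2, two_pos, fun α β hαβ f hdiff hf hf' => ?_⟩
  set μ := volume.restrict (Ioo α β)
  set A := (eLpNorm f 2 μ).toReal
  set B := (eLpNorm (deriv f) 2 μ).toReal
  set u := 1 / p.toReal
  have hu : u ≤ 1 / 2 := by
    rcases eq_or_ne p ⊤ with rfl | hp_top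
    · simp [u]
    · exact one_div_le_one_div_of_le two_pos (by simpa using ENNReal.toReal_mono hp_top hp)
  have hinterp := eLpNorm_le_eLpNorm_top_rpow_mul_eLpNorm_rpow hf.1 two_ne_zero
    ENNReal.ofNat_ne_top hp
  rw [ENNReal.toReal_ofNat, div_eq_mul_one_div] at hinterp
  calc (eLpNorm f p μ).toReal ≤ (2 * (A + √(A * B))) ^ (1 - 2 * u) * A ^ (2 * u) := by
        refine ENNReal.toReal_le_of_le_ofReal (by positivity) (hinterp.trans ?_)
        rw [ENNReal.ofReal_mul (by positivity), ← ENNReal.ofReal_rpow_of_nonneg (by positivity)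
          (by linarith), ← ENNReal.ofReal_rpow_of_nonneg ENNReal.toReal_nonneg (by positivity),
          ENNReal.ofReal_toReal hf.eLpNorm_ne_top]
        gcongr
        · linarith
        · exact eLpNorm_top_le_of_memLp_deriv hαβ hdiff hf hf'
    _ ≤ 2 * (A + A ^ (1 / 2 + u) * B ^ (1 / 2 - u)) :=
        two_mul_add_sqrt_rpow_mul_rpow_le ENNReal.toReal_nonneg ENNReal.toReal_nonneg
          (by positivity) hu
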